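/- Let Ψ : ℂ⁴ → ℂ⁴ be the map Ψ(X,Y,Z,W) = ((2γX−δW)XZ, −(2γX−δW)YZ, (2εX−ζW)W², (2γX−δW)ZW). Then one has the exact componentwise polynomial identity Ψ(Ψ(X,Y,Z,W)) = (2γX−δW)³(2εX−ζW)Z²W² · (X,Y,Z,W) in ℚ[α,β,γ,δ,ε,ζ][X,Y,Z,W]. In particular, at every point where (2γX−δW)(2εX−ζW)ZW ≠ 0, Ψ induces an involution of ℙ³, so Ψ is an involution of the quartic surface Q(α,β,γ,δ,ε,ζ). -/
import Mathlib


noncomputable section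

open MvPolynomial

/-- The map `Ψ(X,Y,Z,W) = ((2γX−δW)XZ, −(2γX−δW)YZ, (2εX−ζW)W², (2γX−δW)ZW)` inducing the
Nikulin involution on the generalized Inose quartic, over any commutative ring. -/
def psi {R : Type*} [CommRing R] (γ δ ε ζ : R) (P : R × R × R × R) : R × R × R × R :=
  ((2 * γ * P.1 - δ * P.2.2.2) * P.1 * P.2.2.1,
   -((2 * γ * P.1 - δ * P.2.2.2) * P.2.1 * P.2.2.1),
   (2 * ε * P.1 - ζ * P.2.2.2) * P.2.2.2 ^ 2,
   (2 * γ * P.1 - δ * P.2.2.2) * P.2.2.1 * P.2.2.2)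

lemma psi_psi {R : Type*} [CommRing R] (γ δ ε ζ x y z w : R) :
    psi γ δ ε ζ (psi γ δ ε ζ (x, y, z, w)) =
      ((2 * γ * x - δ * w) ^ 3 * (2 * ε * x - ζ * w) * z ^ 2 * w ^ 2 * x,
       (2 * γ * x - δ * w) ^ 3 * (2 * ε * x - ζ * w) * z ^ 2 * w ^ 2 * y,
       (2 * γ * x - δ * w) ^ 3 * (2 * ε * x - ζ * w) * z ^ 2 * w ^ 2 * z,
       (2 * γ * x - δ * w) ^ 3 * (2 * ε * x - ζ * w) * z ^ 2 * w ^ 2 * w) := by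
  simp only [psi, Prod.mk.injEq]
  refine ⟨by ring, by ring, by ring, by ring⟩

/-- The componentwise polynomial identity
`Ψ(Ψ(X,Y,Z,W)) = (2γX−δW)³(2εX−ζW)Z²W² · (X,Y,Z,W)` in `ℚ[α,…,ζ][X,Y,Z,W]`
(variables `0,…,5` are `α,…,ζ`, variables `6,…,9` are `X,Y,Z,W`); in particular wherever
`(2γX−δW)(2εX−ζW)ZW ≠ 0` the map `Ψ` induces an involution of `ℙ³`, hence an involution of
the quartic `Q(α,β,γ,δ,ε,ζ)`. -/
theorem stmt6 :
    (psi (X 2 : MvPolynomial (Fin 10) ℚ) (X 3) (X 4) (X 5)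
        (psi (X 2) (X 3) (X 4) (X 5) (X 6, X 7, X 8, X 9)) =
      ((2 * X 2 * X 6 - X 3 * X 9) ^ 3 * (2 * X 4 * X 6 - X 5 * X 9) * X 8 ^ 2 * X 9 ^ 2 * X 6,
       (2 * X 2 * X 6 - X 3 * X 9) ^ 3 * (2 * X 4 * X 6 - X 5 * X 9) * X 8 ^ 2 * X 9 ^ 2 * X 7,
       (2 * X 2 * X 6 - X 3 * X 9) ^ 3 * (2 * X 4 * X 6 - X 5 * X 9) * X 8 ^ 2 * X 9 ^ 2 * X 8,
       (2 * X 2 * X 6 - X 3 * X 9) ^ 3 * (2 * X 4 * X 6 - X 5 * X 9) * X 8 ^ 2 * X 9 ^ 2 * X 9))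
    ∧
    (∀ γ δ ε ζ x y z w : ℂ,
      (2 * γ * x - δ * w) * (2 * ε * x - ζ * w) * z * w ≠ 0 →
      ∃ μ : ℂ, μ ≠ 0 ∧
        psi γ δ ε ζ (psi γ δ ε ζ (x, y, z, w)) = (μ * x, μ * y, μ * z, μ * w)) := by
  constructor
  · exact psi_psi _ _ _ _ _ _ _ _
  · intro γ δ ε ζ x y z w h
    refine ⟨(2 * γ * x - δ * w) ^ 3 * (2 * ε * x - ζ * w) * z ^ 2 * w ^ 2, ?_, psi_psi _ _ _ _ _ _ _ _⟩
    simp only [ne_eq, mul_eq_zero, not_or] at h ⊢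
    push_neg
    exact ⟨⟨⟨pow_ne_zero _ h.1.1.1, h.1.1.2⟩, pow_ne_zero _ h.1.2⟩, pow_ne_zero _ h.2⟩
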